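/- Let 0 < ε ≤ 1, let κ ≥ 2 be an integer, and let v ∈ ℝ^n with |v₁| ≤ ε^{2κ}. Suppose p(v) = v₁ · b(v) where |b(v)| ≤ C ∑_{j=0}^{D−1} |z₁|^j ‖v‖^{D−1−j} for some D ≤ κ−1 and |z₁| ≤ 1, with ‖·‖ the homogeneous gauge. Then |ε^{-D} p(v)| ≤ C' |v₁|^{1/2} (1 + ‖v‖^D) for a constant C' independent of ε, using that |v₁|^{1/2} ≤ ε^{κ} ≤ ε^{D+1}. -/

import Mathlib

open Real

/-- Core estimate of Corollary 3.4: if |v₁| ≤ ε^{2κ}, p = v₁·b with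
|b| ≤ C ∑_{j=0}^{D−1}|z₁|^j ‖v‖^{D−1−j}, D ≤ κ−1, |z₁| ≤ 1, then
|ε^{−D} p| ≤ C' |v₁|^{1/2}(1+‖v‖^D) with C' independent of ε. -/
theorem stmt14 (C : ℝ) (hC : 0 ≤ C) (D κ : ℕ) (hκ : 2 ≤ κ) (hD : D ≤ κ - 1) :
    ∃ C' : ℝ, ∀ ε v1 z1 N b p : ℝ,
      0 < ε → ε ≤ 1 → |v1| ≤ ε ^ (2 * κ) → |z1| ≤ 1 → 0 ≤ N →
      p = v1 * b →
      |b| ≤ C * ∑ j ∈ Finset.range D, |z1| ^ j * N ^ (D - 1 - j) →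
      |p| / ε ^ D ≤ C' * |v1| ^ ((1:ℝ)/2) * (1 + N ^ D) := by
  refine ⟨C * D, fun ε v1 z1 N b p hε hε1 hv hz hN hp hb => ?_⟩
  have hεD : (0:ℝ) < ε ^ D := pow_pos hε D
  have hv0 : (0:ℝ) ≤ |v1| := abs_nonneg _
  have hvh : (0:ℝ) ≤ |v1| ^ ((1:ℝ)/2) := Real.rpow_nonneg hv0 _
  -- |v1|^{1/2} ≤ ε^κ
  have h1 : |v1| ^ ((1:ℝ)/2) ≤ ε ^ κ := by
    have := Real.rpow_le_rpow hv0 hv (by norm_num : (0:ℝ) ≤ 1/2)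
    calc |v1| ^ ((1:ℝ)/2) ≤ (ε ^ (2*κ)) ^ ((1:ℝ)/2) := this
      _ = ε ^ κ := by
        rw [← Real.rpow_natCast ε (2*κ), ← Real.rpow_mul hε.le]
        push_cast
        rw [show (2 * (κ:ℝ)) * (1/2) = (κ:ℝ) by ring, Real.rpow_natCast]
  -- ε^κ ≤ ε^D
  have hDκ : D ≤ κ := le_trans hD (Nat.sub_le _ _)
  have h2 : ε ^ κ ≤ ε ^ D := pow_le_pow_of_le_one hε.le hε1 hDκ
  -- |v1| ≤ |v1|^{1/2} * ε^D
  have h3 : |v1| ≤ |v1| ^ ((1:ℝ)/2) * ε ^ D := by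
    have heq : |v1| ^ ((1:ℝ)/2) * |v1| ^ ((1:ℝ)/2) = |v1| := by
      rw [← Real.rpow_add' hv0 (by norm_num)]
      norm_num
    conv_lhs => rw [← heq]
    exact mul_le_mul_of_nonneg_left (h1.trans h2) hvh
  -- sum bound
  have hsum : ∑ j ∈ Finset.range D, |z1| ^ j * N ^ (D - 1 - j) ≤ D * (1 + N ^ D) := by
    calc ∑ j ∈ Finset.range D, |z1| ^ j * N ^ (D - 1 - j)
        ≤ ∑ _j ∈ Finset.range D, (1 + N ^ D) := by
          apply Finset.sum_le_sum
          intro j _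
          have hz1 : |z1| ^ j ≤ 1 := pow_le_one₀ (abs_nonneg _) hz
          have hNj : N ^ (D - 1 - j) ≤ 1 + N ^ D := by
            rcases le_or_gt N 1 with hN1 | hN1
            · have : N ^ (D - 1 - j) ≤ 1 := pow_le_one₀ hN hN1
              nlinarith [pow_nonneg hN D]
            · have : N ^ (D - 1 - j) ≤ N ^ D :=
                pow_le_pow_right₀ hN1.le (le_trans (Nat.sub_le _ _) (Nat.sub_le _ _))
              linarith
          calc |z1| ^ j * N ^ (D - 1 - j) ≤ 1 * (1 + N ^ D) :=
                mul_le_mul hz1 hNj (pow_nonneg hN _) zero_le_one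
            _ = 1 + N ^ D := one_mul _
      _ = D * (1 + N ^ D) := by rw [Finset.sum_const, Finset.card_range, nsmul_eq_mul]
  have hbnn : (0:ℝ) ≤ C * ∑ j ∈ Finset.range D, |z1| ^ j * N ^ (D - 1 - j) :=
    le_trans (abs_nonneg b) hb
  have h1N : (0:ℝ) ≤ 1 + N ^ D := by positivity
  have hb2 : |b| ≤ C * (D * (1 + N ^ D)) :=
    hb.trans (mul_le_mul_of_nonneg_left hsum hC)
  rw [div_le_iff₀ hεD, hp, abs_mul]
  calc |v1| * |b| ≤ (|v1| ^ ((1:ℝ)/2) * ε ^ D) * (C * (D * (1 + N ^ D))) :=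
        mul_le_mul h3 hb2 (abs_nonneg _) (by positivity)
    _ = C * ↑D * |v1| ^ ((1:ℝ)/2) * (1 + N ^ D) * ε ^ D := by ring
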